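/- Let (T,*,[[·,·,·]]) be a left Bol algebra over ℝ and ν: T × T → T* a bilinear map. Define on T ⊕ T* the binary operation (x+f) *_ν (y+g) := x*y + ν(x,y) + f∘l(y) - g∘l(x), where (f∘l(y))(z) = f(y*z), and define b̃(x+f,y+g) := f(y) + g(x). Then b̃ satisfies the associativity condition b̃((x+f)*_ν(y+g), z+h) = b̃(x+f, (y+g)*_ν(z+h)) for all x,y,z ∈ T, f,g,h ∈ T* if and only if ν(x,y)(z) = ν(y,z)(x) for all x,y,z ∈ T. -/

import Mathlib

/-- A left Bol algebra over ℝ: a real vector space with a bilinear operation `mul`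
and a trilinear operation `tri` satisfying (T01), (T02), (T1), (T2) and (T3). -/
structure LeftBolAlgebra (T : Type*) [AddCommGroup T] [Module ℝ T] where
  mul : T →ₗ[ℝ] T →ₗ[ℝ] T
  tri : T →ₗ[ℝ] T →ₗ[ℝ] T →ₗ[ℝ] T
  mul_anticomm : ∀ x y : T, mul x y = - mul y x
  tri_skew : ∀ x y z : T, tri x y z = - tri y x z
  tri_cyclic : ∀ x y z : T, tri x y z + tri y z x + tri z x y = 0
  tri_leibniz : ∀ u v x y z : T,
    tri u v (tri x y z) = tri (tri u v x) y z + tri x (tri u v y) z + tri x y (tri u v z)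
  bol : ∀ u v x y : T, tri u v (mul x y) =
    mul (tri u v x) y + mul x (tri u v y) + tri x y (mul u v) - mul (mul x y) (mul u v)

variable {T : Type*} [AddCommGroup T] [Module ℝ T]

/-- The binary operation (x+f) *_ν (y+g) = x*y + ν(x,y) + f∘l(y) - g∘l(x) on T ⊕ T*,
where l(y)(z) = y*z. -/
def mulNu (A : LeftBolAlgebra T) (ν : T →ₗ[ℝ] T →ₗ[ℝ] Module.Dual ℝ T)
    (p q : T × Module.Dual ℝ T) : T × Module.Dual ℝ T :=
  (A.mul p.1 q.1, ν p.1 q.1 + p.2 ∘ₗ A.mul q.1 - q.2 ∘ₗ A.mul p.1)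

/-- The form b̃ on T ⊕ T* given by b̃(x+f, y+g) = f(y) + g(x). -/
def btilde (p q : T × Module.Dual ℝ T) : ℝ :=
  p.2 q.1 + q.2 p.1

theorem LeftBolAlgebra.apply_mul_add_apply_mul_swap (A : LeftBolAlgebra T)
    (f : Module.Dual ℝ T) (x y : T) : f (A.mul x y) + f (A.mul y x) = 0 := by
  rw [A.mul_anticomm y x, map_neg, add_neg_cancel]

-- The `T*`-components cancel in pairs by anticommutativity of `A.mul`.
theorem btilde_mulNu_sub_btilde_mulNu (A : LeftBolAlgebra T)
    (ν : T →ₗ[ℝ] T →ₗ[ℝ] Module.Dual ℝ T) (p q r : T × Module.Dual ℝ T) :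
    btilde (mulNu A ν p q) r - btilde p (mulNu A ν q r) = ν p.1 q.1 r.1 - ν q.1 r.1 p.1 := by
  have hq := A.apply_mul_add_apply_mul_swap q.2 p.1 r.1
  have hr := A.apply_mul_add_apply_mul_swap r.2 p.1 q.1
  simp only [btilde, mulNu, LinearMap.add_apply, LinearMap.sub_apply, LinearMap.comp_apply]
  linear_combination hr - hq

/-- For a left Bol algebra T and a bilinear map ν : T × T → T*, the form b̃ satisfies
the associativity condition b̃((x+f)*_ν(y+g), z+h) = b̃(x+f, (y+g)*_ν(z+h)) for all
elements of T ⊕ T* if and only if ν(x,y)(z) = ν(y,z)(x) for all x,y,z ∈ T. -/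
theorem btilde_assoc_iff_nu_cyclic
    (A : LeftBolAlgebra T) (ν : T →ₗ[ℝ] T →ₗ[ℝ] Module.Dual ℝ T) :
    (∀ p q r : T × Module.Dual ℝ T,
        btilde (mulNu A ν p q) r = btilde p (mulNu A ν q r)) ↔
      (∀ x y z : T, ν x y z = ν y z x) := by
  simp_rw [← sub_eq_zero (a := btilde _ _), btilde_mulNu_sub_btilde_mulNu, sub_eq_zero]
  exact ⟨fun h x y z ↦ h (x, 0) (y, 0) (z, 0), fun h p q r ↦ h p.1 q.1 r.1⟩
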